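/- arXiv:0906.1249 — 2 statements merged into one kernel-verified Lean document; each statement's English description precedes it below -/
import Mathlib

section
/- For positive reals α₁, …, αₙ with α₁ + ⋯ + αₙ = π and each αᵢ < π/2, the sum ∑ tan αᵢ is at least n·tan(π/n), with equality if and only if all αᵢ = π/n. -/
open Real Finset

/-!
The half-angles lie in `[0, π/2)`, where `tan` is strictly convex because its derivative
`1 / cos²` is strictly increasing there. Jensen's inequality for the uniform weights `1/n`
gives `tan (π/n) ≤ (1/n) ∑ tan αᵢ`, and strict convexity forces equality only when all
`αᵢ` coincide with their mean `π/n`.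
-/

theorem strictConvexOn_tan : StrictConvexOn ℝ (Set.Ico 0 (π / 2)) tan := by
  apply StrictMonoOn.strictConvexOn_of_deriv (convex_Ico _ _)
  · exact continuousOn_tan_Ioo.mono fun x hx ↦ ⟨by linarith [hx.1, pi_pos], hx.2⟩
  · rw [interior_Ico]
    intro x hx y hy hxy
    have hcos_lt : cos y < cos x :=
      cos_lt_cos_of_nonneg_of_le_pi_div_two hx.1.le hy.2.le hxy
    have hcos_pos : 0 < cos y := cos_pos_of_mem_Ioo ⟨by linarith [hy.1, pi_pos], hy.2⟩
    simp only [deriv_tan]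
    gcongr

section Mean

variable {ι 𝕜 E : Type*} [Field 𝕜] [LinearOrder 𝕜] [IsStrictOrderedRing 𝕜]
  [AddCommGroup E] [Module 𝕜 E] {s : Set E} {f : E → 𝕜} {t : Finset ι} {p : ι → E}

lemma ConvexOn.card_mul_map_mean_le_sum (hf : ConvexOn 𝕜 s f) (hp : ∀ i ∈ t, p i ∈ s) :
    (#t : 𝕜) * f ((#t : 𝕜)⁻¹ • ∑ i ∈ t, p i) ≤ ∑ i ∈ t, f (p i) := by
  obtain rfl | ht := t.eq_empty_or_nonempty
  · simp
  have hcard : (0 : 𝕜) < #t := by exact_mod_cast ht.card_pos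
  have := hf.map_sum_le (t := t) (w := fun _ ↦ (#t : 𝕜)⁻¹) (fun _ _ ↦ by positivity)
    (by simp [hcard.ne']) hp
  rw [← smul_sum, ← smul_sum, smul_eq_mul] at this
  exact (le_inv_mul_iff₀ hcard).mp this

lemma StrictConvexOn.sum_eq_card_mul_map_mean_iff (hf : StrictConvexOn 𝕜 s f)
    (hp : ∀ i ∈ t, p i ∈ s) :
    ∑ i ∈ t, f (p i) = (#t : 𝕜) * f ((#t : 𝕜)⁻¹ • ∑ i ∈ t, p i) ↔
      ∀ i ∈ t, p i = (#t : 𝕜)⁻¹ • ∑ i ∈ t, p i := by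
  obtain rfl | ht := t.eq_empty_or_nonempty
  · simp
  have hcard : (0 : 𝕜) < #t := by exact_mod_cast ht.card_pos
  have := hf.map_sum_eq_iff (t := t) (w := fun _ ↦ (#t : 𝕜)⁻¹) (fun _ _ ↦ by positivity)
    (by simp [hcard.ne']) hp
  rw [← smul_sum, ← smul_sum, smul_eq_mul] at this
  rw [← this, eq_inv_mul_iff_mul_eq₀ hcard.ne', eq_comm]

end Mean

theorem sum_tan_ge_of_sum_eq_pi_general (n : ℕ) (α : Fin n → ℝ)
    (hpos : ∀ i, 0 < α i) (hlt : ∀ i, α i < π / 2)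
    (hsum : ∑ i, α i = π) :
    (n : ℝ) * Real.tan (π / n) ≤ ∑ i, Real.tan (α i) ∧
      (∑ i, Real.tan (α i) = (n : ℝ) * Real.tan (π / n) ↔ ∀ i, α i = π / n) := by
  have hmem : ∀ i ∈ univ, α i ∈ Set.Ico 0 (π / 2) := fun i _ ↦ ⟨(hpos i).le, hlt i⟩
  have hcard : (#(univ : Finset (Fin n)) : ℝ) = n := by simp
  have hmean : (n : ℝ)⁻¹ • ∑ i, α i = π / n := by rw [hsum, smul_eq_mul, inv_mul_eq_div]
  refine ⟨?_, ?_⟩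
  · simpa only [hmean, hcard] using strictConvexOn_tan.convexOn.card_mul_map_mean_le_sum hmem
  · simpa only [hmean, hcard, mem_univ, true_imp_iff] using
      strictConvexOn_tan.sum_eq_card_mul_map_mean_iff hmem

theorem sum_tan_ge_of_sum_eq_pi (n : ℕ) (hn : 0 < n) (α : Fin n → ℝ)
    (hpos : ∀ i, 0 < α i) (hlt : ∀ i, α i < π / 2)
    (hsum : ∑ i, α i = π) :
    (n : ℝ) * Real.tan (π / n) ≤ ∑ i, Real.tan (α i) ∧
      (∑ i, Real.tan (α i) = (n : ℝ) * Real.tan (π / n) ↔ ∀ i, α i = π / n) :=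
  sum_tan_ge_of_sum_eq_pi_general n α hpos hlt hsum
end

section
/- Let O be the center of a unit sphere, H a point at distance 1 from O, and consider the right triangle ABH in the plane through H perpendicular to OH, with HB ⊥ AB, ∠AHB = θ fixed (0 < θ < π/2), and BH = x > 0. Then the ratio η(x) of the solid-angle volume of the unit sphere cut out by the tetrahedron OABH to the volume of OABH (which equals x² tan θ / 6) is a strictly decreasing function of x, with η → 1 as x → 0⁺ and η → 0 as x → ∞. -/
/-!
The linear map `M_x` whose columns are `A`, `B`, `H` carries the positive orthant onto the cone
over `OABH` and the corner simplex `{a ≥ 0, a₀ + a₁ + a₂ < 1}` (volume `1/6`) onto `OABH`; its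
determinant is `-x² tan θ`. Hence `η x = 6 · vol W_x` with `W_x = {a ≥ 0 : ‖M_x a‖ < 1}` and
`‖M_x a‖² = x²(a₀ + a₁)² + x² tan² θ a₀² + (a₀ + a₁ + a₂)²`. This grows with `x`, so `W_x`
shrinks, strictly since a nonempty open set leaves it. Since the last coordinate of `M_x a` is
`a₀ + a₁ + a₂`, `W_x` lies in the corner simplex, and it contains that simplex scaled by `1/‖A‖`;
so `η → 1` as `x → 0`. Finally `W_x` lies in a box of volume `1/(x² tan θ)`, so `η → 0` as
`x → ∞`.
-/

open Real MeasureTheory Metric Filter Set Topology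
open scoped Pointwise Nat Matrix

def cornerSimplex (n : ℕ) : Set (Fin n → ℝ) := {y | 0 ≤ y ∧ ∑ i, y i < 1}

lemma smul_cornerSimplex {n : ℕ} {r : ℝ} (hr : 0 < r) :
    r • cornerSimplex n = {y | 0 ≤ y ∧ ∑ i, y i < r} := by
  ext y
  simp [mem_smul_set_iff_inv_smul_mem₀ hr.ne', cornerSimplex, Pi.le_def, ← Finset.mul_sum,
    inv_mul_lt_iff₀ hr, hr]

lemma integral_one_sub_pow_div_factorial (n : ℕ) :
    ∫ a in Ico (0 : ℝ) 1, (1 - a) ^ n / n ! = 1 / (n + 1)! := by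
  rw [integral_Ico_eq_integral_Ioo, ← integral_Ioc_eq_integral_Ioo,
    ← intervalIntegral.integral_of_le zero_le_one, intervalIntegral.integral_div,
    intervalIntegral.integral_comp_sub_left (fun a => a ^ n), integral_pow]
  push_cast [Nat.factorial_succ]
  field_simp
  ring

theorem volume_cornerSimplex (n : ℕ) : volume (cornerSimplex n) = ENNReal.ofReal (1 / n !) := by
  induction n with
  | zero =>
    have : cornerSimplex 0 = univ := by ext y; simp [cornerSimplex]
    simp [this, volume_pi, Measure.pi_empty_univ]
  | succ n ih =>
    set S : Set (ℝ × (Fin n → ℝ)) := {p | 0 ≤ p.1 ∧ 0 ≤ p.2 ∧ p.1 + ∑ i, p.2 i < 1}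
    have hS : MeasurableSet S :=
      measurableSet_le measurable_const measurable_fst |>.inter <|
        (measurableSet_le measurable_const measurable_snd).inter <|
        measurableSet_lt (measurable_fst.add (Finset.measurable_sum _ fun i _ =>
          (measurable_pi_apply i).comp measurable_snd)) measurable_const
    have hpre : cornerSimplex (n + 1) = MeasurableEquiv.piFinSuccAbove (fun _ => ℝ) 0 ⁻¹' S := by
      ext y
      simp [S, cornerSimplex, MeasurableEquiv.piFinSuccAbove_apply, Fin.insertNthEquiv,
        Fin.sum_univ_succ, Pi.le_def, Fin.forall_fin_succ, Fin.tail, and_assoc]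
    have hsection (a : ℝ) : volume (Prod.mk a ⁻¹' S) =
        (Ico 0 1).indicator (fun a => ENNReal.ofReal ((1 - a) ^ n / n !)) a := by
      by_cases ha : a ∈ Ico (0 : ℝ) 1
      · have : Prod.mk a ⁻¹' S = (1 - a) • cornerSimplex n := by
          rw [smul_cornerSimplex (by linarith [ha.2])]
          ext z
          simp [S, ha.1, lt_sub_iff_add_lt']
        rw [indicator_of_mem ha, this, Measure.addHaar_smul_of_nonneg _ (by linarith [ha.2]), ih,
          Module.finrank_fin_fun, ← ENNReal.ofReal_mul (pow_nonneg (by linarith [ha.2]) _),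
          mul_one_div]
      · have : Prod.mk a ⁻¹' S = ∅ := by
          refine eq_empty_of_forall_notMem fun z ⟨ha0, hz, hsum⟩ => ha ⟨ha0, ?_⟩
          linarith [Finset.sum_nonneg fun i (_ : i ∈ Finset.univ) => hz i]
        rw [indicator_of_notMem ha, this, measure_empty]
    rw [hpre, (volume_preserving_piFinSuccAbove (fun _ => ℝ) 0).measure_preimage_equiv,
      Measure.volume_eq_prod, Measure.prod_apply hS]
    simp_rw [hsection]
    rw [lintegral_indicator measurableSet_Ico, ← ofReal_integral_eq_lintegral_ofReal,
      integral_one_sub_pow_div_factorial]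
    · exact (Continuous.integrableOn_Icc (by fun_prop)).mono_set Ico_subset_Icc_self
    · filter_upwards [ae_restrict_mem measurableSet_Ico] with a ha
      have : 0 ≤ 1 - a := by linarith [ha.2]
      positivity

section Cone

variable {V : Type*} [AddCommGroup V] [Module ℝ V]

def coneOver (T : Set V) : Set V := {y | ∃ t : ℝ, 0 ≤ t ∧ ∃ p ∈ T, y = t • p}

lemma coneOver_convexHull_insert_zero {ι : Type*} [Fintype ι] [DecidableEq ι] (v : ι → V) :
    coneOver (convexHull ℝ (insert 0 (range v))) = (fun a : ι → ℝ => ∑ i, a i • v i) '' Ici 0 := by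
  set g : (ι → ℝ) →ₗ[ℝ] V := Fintype.linearCombination ℝ v
  change coneOver _ = g '' Ici 0
  apply Subset.antisymm
  · have hull : convexHull ℝ (insert 0 (range v)) ⊆ g '' Ici 0 := by
      refine convexHull_min ?_ ((convex_Ici 0).linear_image g)
      rintro p (rfl | ⟨i, rfl⟩)
      · exact ⟨0, mem_Ici.2 le_rfl, map_zero g⟩
      · refine ⟨Pi.single i 1, mem_Ici.2 (Pi.single_nonneg.2 zero_le_one), ?_⟩
        simp [g]
    rintro _ ⟨t, ht, p, hp, rfl⟩
    obtain ⟨a, ha, rfl⟩ := hull hp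
    exact ⟨t • a, mem_Ici.2 (smul_nonneg ht ha), map_smul g t a⟩
  · rintro _ ⟨a, ha, rfl⟩
    set s := 1 + ∑ i, a i
    have hs : 0 < s := by
      linarith [Finset.sum_nonneg fun i (_ : i ∈ Finset.univ) => (ha : 0 ≤ a) i]
    -- Dividing by `1 + ∑ a i` rather than `∑ a i` covers `a = 0` too: the spare weight goes to `0`.
    have hmem := (convex_convexHull ℝ (insert 0 (range v))).sum_mem (t := Finset.univ)
      (w := fun o : Option ι => o.elim s⁻¹ fun i => s⁻¹ * a i) (z := fun o : Option ι => o.elim 0 v)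
      (fun o _ => o.rec (inv_nonneg.2 hs.le) fun i => mul_nonneg (inv_nonneg.2 hs.le) (ha i))
      (by
        simp only [Fintype.sum_option, Option.elim, ← Finset.mul_sum, ← mul_one_add]
        exact inv_mul_cancel₀ hs.ne')
      (fun o _ => subset_convexHull ℝ _ <|
        o.rec (mem_insert 0 _) fun i => mem_insert_of_mem 0 ⟨i, rfl⟩)
    refine ⟨s, hs.le, s⁻¹ • g a, ?_, (smul_inv_smul₀ hs.ne' _).symm⟩
    simpa [Fintype.sum_option, g, Fintype.linearCombination_apply, Finset.smul_sum, smul_smul]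
      using hmem

end Cone

lemma volume_inter_image_toLp_mulVec {ι : Type*} [Fintype ι] [DecidableEq ι] (M : Matrix ι ι ℝ)
    (S : Set (EuclideanSpace ℝ ι)) (K : Set (ι → ℝ)) :
    volume (S ∩ (fun a => WithLp.toLp 2 (M *ᵥ a)) '' K) =
      ENNReal.ofReal |M.det| * volume (K ∩ (fun a => WithLp.toLp 2 (M *ᵥ a)) ⁻¹' S) := by
  have htoLp := (EuclideanSpace.volume_preserving_symm_measurableEquiv_toLp ι).symm
  calc volume (S ∩ (fun a => WithLp.toLp 2 (M *ᵥ a)) '' K)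
      = volume (Matrix.toLin' M '' K ∩ WithLp.toLp 2 ⁻¹' S) := by
        rw [← htoLp.measure_preimage_equiv]
        congr 1
        ext b
        simp [and_comm]
    _ = volume (Matrix.toLin' M '' (K ∩ Matrix.toLin' M ⁻¹' (WithLp.toLp 2 ⁻¹' S))) := by
        rw [image_inter_preimage]
    _ = _ := by
        rw [Measure.addHaar_image_linearMap, LinearMap.det_toLin']
        rfl

-- Its columns are the vertices `A`, `B`, `H` for `c = tan θ`.
def tetraMatrix (x c : ℝ) : Matrix (Fin 3) (Fin 3) ℝ := !![x, x, 0; x * c, 0, 0; 1, 1, 1]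

def sectorNormSq (x c : ℝ) (a : Fin 3 → ℝ) : ℝ :=
  (x * (a 0 + a 1)) ^ 2 + (x * c * a 0) ^ 2 + (a 0 + a 1 + a 2) ^ 2

-- The part of the unit ball in the cone over `OABH`, in coordinates w.r.t. the columns of
-- `tetraMatrix x c`.
def sector (x c : ℝ) : Set (Fin 3 → ℝ) := {a | 0 ≤ a ∧ sectorNormSq x c a < 1}

lemma continuous_sectorNormSq (x c : ℝ) : Continuous (sectorNormSq x c) := by
  unfold sectorNormSq
  fun_prop

lemma toLp_tetraMatrix_mulVec (x c : ℝ) (a : Fin 3 → ℝ) :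
    WithLp.toLp 2 (tetraMatrix x c *ᵥ a) = ∑ i, a i •
      ![WithLp.toLp 2 ![x, x * c, 1], WithLp.toLp 2 ![x, 0, 1], WithLp.toLp 2 ![0, 0, 1]] i := by
  ext i
  fin_cases i <;> simp [tetraMatrix, Matrix.mulVec, dotProduct, Fin.sum_univ_three] <;> ring

lemma norm_toLp_tetraMatrix_mulVec_sq (x c : ℝ) (a : Fin 3 → ℝ) :
    ‖WithLp.toLp 2 (tetraMatrix x c *ᵥ a)‖ ^ 2 = sectorNormSq x c a := by
  simp [EuclideanSpace.norm_sq_eq, Fin.sum_univ_three, tetraMatrix, dotProduct, sectorNormSq]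
  ring

lemma det_tetraMatrix (x c : ℝ) : (tetraMatrix x c).det = -(x ^ 2 * c) := by
  simp [tetraMatrix, Matrix.det_fin_three]
  ring

lemma volume_ball_inter_coneOver_tetra (x : ℝ) {c : ℝ} (hc : 0 ≤ c) :
    volume (ball 0 1 ∩ coneOver (convexHull ℝ {0, WithLp.toLp 2 ![x, x * c, 1],
      WithLp.toLp 2 ![x, 0, 1], WithLp.toLp 2 ![0, 0, 1]})) =
      ENNReal.ofReal (x ^ 2 * c) * volume (sector x c) := by
  have hvertices : ({0, WithLp.toLp 2 ![x, x * c, 1], WithLp.toLp 2 ![x, 0, 1],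
      WithLp.toLp 2 ![0, 0, 1]} : Set (EuclideanSpace ℝ (Fin 3))) =
      insert 0 (range ![WithLp.toLp 2 ![x, x * c, 1], WithLp.toLp 2 ![x, 0, 1],
        WithLp.toLp 2 ![0, 0, 1]]) := by
    ext p
    simp [Matrix.range_cons, Matrix.range_empty]
    tauto
  rw [hvertices, coneOver_convexHull_insert_zero]
  simp_rw [← toLp_tetraMatrix_mulVec]
  rw [volume_inter_image_toLp_mulVec, det_tetraMatrix, abs_neg, abs_of_nonneg (by positivity)]
  congr 2
  ext a
  simp [sector, ← sq_lt_one_iff₀ (norm_nonneg _), norm_toLp_tetraMatrix_mulVec_sq]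

section Sector

variable {x c : ℝ}

lemma sector_subset_cornerSimplex : sector x c ⊆ cornerSimplex 3 := by
  rintro a ⟨ha, hN⟩
  refine ⟨ha, ?_⟩
  have ha' : ∀ i, 0 ≤ a i := ha
  have := ha' 0; have := ha' 1; have := ha' 2
  simp only [sectorNormSq] at hN
  rw [Fin.sum_univ_three]
  nlinarith [sq_nonneg (x * (a 0 + a 1)), sq_nonneg (x * c * a 0)]

lemma smul_cornerSimplex_subset_sector :
    (√(1 + x ^ 2 * (1 + c ^ 2)))⁻¹ • cornerSimplex 3 ⊆ sector x c := by
  set ρ := 1 + x ^ 2 * (1 + c ^ 2)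
  have hρ : 0 < ρ := by positivity
  rw [smul_cornerSimplex (by positivity)]
  rintro a ⟨ha, hs⟩
  rw [Fin.sum_univ_three] at hs
  refine ⟨ha, ?_⟩
  have ha' : ∀ i, 0 ≤ a i := ha
  have := ha' 0; have := ha' 1; have := ha' 2
  have h01 : (a 0 + a 1) ^ 2 ≤ (a 0 + a 1 + a 2) ^ 2 :=
    pow_le_pow_left₀ (by positivity) (by linarith) 2
  have h0 : a 0 ^ 2 ≤ (a 0 + a 1 + a 2) ^ 2 := pow_le_pow_left₀ (ha' 0) (by linarith) 2
  calc sectorNormSq x c a ≤ ρ * (a 0 + a 1 + a 2) ^ 2 := by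
        simp only [sectorNormSq, ρ]
        nlinarith [mul_le_mul_of_nonneg_left h01 (sq_nonneg x),
          mul_le_mul_of_nonneg_left h0 (sq_nonneg (x * c))]
    _ < ρ * ((√ρ)⁻¹) ^ 2 := by gcongr
    _ = 1 := by rw [inv_pow, sq_sqrt hρ.le, mul_inv_cancel₀ hρ.ne']

lemma sector_subset_pi_Ico (hx : 0 < x) (hc : 0 < c) :
    sector x c ⊆ univ.pi ![Ico 0 (x * c)⁻¹, Ico 0 x⁻¹, Ico 0 1] := by
  rintro a ⟨ha, hN⟩
  have ha' : ∀ i, 0 ≤ a i := ha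
  have := ha' 0; have := ha' 1; have := ha' 2
  simp only [sectorNormSq] at hN
  have h0 : x * c * a 0 < 1 := by
    nlinarith [sq_nonneg (x * (a 0 + a 1)), sq_nonneg (a 0 + a 1 + a 2)]
  have h1 : x * (a 0 + a 1) < 1 := by
    nlinarith [sq_nonneg (x * c * a 0), sq_nonneg (a 0 + a 1 + a 2)]
  have h2 : a 0 + a 1 + a 2 < 1 := by
    nlinarith [sq_nonneg (x * (a 0 + a 1)), sq_nonneg (x * c * a 0)]
  simp only [Set.mem_pi, mem_univ, forall_const, Fin.forall_fin_succ, Fin.succ_zero_eq_one,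
    Fin.succ_one_eq_two]
  refine ⟨⟨ha' 0, ?_⟩, ⟨ha' 1, ?_⟩, ⟨ha' 2, ?_⟩, fun i => i.elim0⟩
  · rw [← one_div, lt_div_iff₀ (by positivity)]
    linarith
  · rw [← one_div, lt_div_iff₀ hx]
    nlinarith
  · linarith

lemma sector_subset_sector {x₁ x₂ : ℝ} (hx : 0 ≤ x₁) (h : x₁ ≤ x₂) : sector x₂ c ⊆ sector x₁ c := by
  rintro a ⟨ha, hN⟩
  refine ⟨ha, lt_of_le_of_lt ?_ hN⟩
  have ha' : ∀ i, 0 ≤ a i := ha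
  have := ha' 0; have := ha' 1
  have hsq : x₁ ^ 2 ≤ x₂ ^ 2 := pow_le_pow_left₀ hx h 2
  simp only [sectorNormSq]
  nlinarith [mul_le_mul_of_nonneg_right hsq (sq_nonneg (a 0 + a 1)),
    mul_le_mul_of_nonneg_right hsq (sq_nonneg (c * a 0))]

lemma volume_sector_le : volume (sector x c) ≤ ENNReal.ofReal (1 / 6) := by
  simpa [Nat.factorial] using
    (measure_mono sector_subset_cornerSimplex).trans_eq (volume_cornerSimplex 3)

lemma volume_sector_ne_top : volume (sector x c) ≠ ⊤ :=
  ne_top_of_le_ne_top ENNReal.ofReal_ne_top volume_sector_le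

lemma volume_sector_lt {x₁ x₂ : ℝ} (hx : 0 < x₁) (h : x₁ < x₂) :
    volume (sector x₂ c) < volume (sector x₁ c) := by
  set U : Set (Fin 3 → ℝ) := {a | (0 < a 0 ∧ 0 < a 1 ∧ 0 < a 2) ∧
    sectorNormSq x₁ c a < 1 ∧ 1 < sectorNormSq x₂ c a}
  have hU_open : IsOpen U :=
    ((isOpen_lt continuous_const (continuous_apply 0)).and <|
      (isOpen_lt continuous_const (continuous_apply 1)).and
        (isOpen_lt continuous_const (continuous_apply 2))).and <|
    (isOpen_lt (continuous_sectorNormSq x₁ c) continuous_const).and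
      (isOpen_lt continuous_const (continuous_sectorNormSq x₂ c))
  have hU_nonempty : U.Nonempty := by
    set P : ℝ → ℝ := fun x => 4 * x ^ 2 + x ^ 2 * c ^ 2 + 9
    have hN (x t : ℝ) : sectorNormSq x c (fun _ => t) = t ^ 2 * P x := by
      simp only [sectorNormSq, P]
      ring
    have hP : P x₁ < P x₂ := by
      have := pow_lt_pow_left₀ h hx.le two_ne_zero
      nlinarith [mul_le_mul_of_nonneg_right this.le (sq_nonneg c)]
    set t := √(2 / (P x₁ + P x₂))
    have ht : 0 < t := sqrt_pos.2 (by positivity)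
    have ht2 : t ^ 2 = 2 / (P x₁ + P x₂) := sq_sqrt (by positivity)
    refine ⟨fun _ => t, ⟨ht, ht, ht⟩, ?_, ?_⟩
    · rw [hN, ht2, div_mul_eq_mul_div, div_lt_one (by positivity)]
      linarith
    · rw [hN, ht2, div_mul_eq_mul_div, one_lt_div (by positivity)]
      linarith
  have hU_sub : U ⊆ sector x₁ c := by
    rintro a ⟨⟨h0, h1, h2⟩, hN, -⟩
    refine ⟨fun i => ?_, hN⟩
    fin_cases i <;> simp [h0.le, h1.le, h2.le]
  have hU_disj : Disjoint (sector x₂ c) U :=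
    disjoint_left.2 fun a ha hU => (ha.2.trans hU.2.2).false
  calc volume (sector x₂ c) < volume (sector x₂ c) + volume U :=
        ENNReal.lt_add_right volume_sector_ne_top (hU_open.measure_pos volume hU_nonempty).ne'
    _ = volume (sector x₂ c ∪ U) := (measure_union hU_disj hU_open.measurableSet).symm
    _ ≤ volume (sector x₁ c) := measure_mono (union_subset (sector_subset_sector hx.le h.le) hU_sub)

lemma toReal_volume_sector_le_one_sixth : (volume (sector x c)).toReal ≤ 1 / 6 :=
  ENNReal.toReal_le_of_le_ofReal (by norm_num) volume_sector_le

lemma le_toReal_volume_sector :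
    (√(1 + x ^ 2 * (1 + c ^ 2)))⁻¹ ^ 3 / 6 ≤ (volume (sector x c)).toReal := by
  rw [← ENNReal.ofReal_le_iff_le_toReal volume_sector_ne_top]
  calc ENNReal.ofReal ((√(1 + x ^ 2 * (1 + c ^ 2)))⁻¹ ^ 3 / 6)
      = volume ((√(1 + x ^ 2 * (1 + c ^ 2)))⁻¹ • cornerSimplex 3) := by
        rw [Measure.addHaar_smul_of_nonneg _ (by positivity), volume_cornerSimplex,
          Module.finrank_fin_fun, ← ENNReal.ofReal_mul (by positivity)]
        norm_num [Nat.factorial, div_eq_mul_one_div _ (6 : ℝ)]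
    _ ≤ volume (sector x c) := measure_mono smul_cornerSimplex_subset_sector

lemma toReal_volume_sector_le_inv (hx : 0 < x) (hc : 0 < c) :
    (volume (sector x c)).toReal ≤ (x ^ 2 * c)⁻¹ := by
  refine ENNReal.toReal_le_of_le_ofReal (by positivity) ?_
  calc volume (sector x c) ≤ volume (univ.pi ![Ico 0 (x * c)⁻¹, Ico 0 x⁻¹, Ico (0 : ℝ) 1]) :=
        measure_mono (sector_subset_pi_Ico hx hc)
    _ = ENNReal.ofReal (x ^ 2 * c)⁻¹ := by
        rw [volume_pi_pi, Fin.prod_univ_three]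
        simp only [Matrix.cons_val, Real.volume_Ico, sub_zero, ENNReal.ofReal_one, mul_one,
          ← ENNReal.ofReal_mul (by positivity : (0 : ℝ) ≤ (x * c)⁻¹)]
        congr 1
        field_simp

lemma strictAntiOn_toReal_volume_sector (c : ℝ) :
    StrictAntiOn (fun x => (volume (sector x c)).toReal) (Ioi 0) := fun _ hx₁ _ _ h =>
  (ENNReal.toReal_lt_toReal volume_sector_ne_top volume_sector_ne_top).2 (volume_sector_lt hx₁ h)

lemma tendsto_toReal_volume_sector_nhdsGT_zero (c : ℝ) :
    Tendsto (fun x => (volume (sector x c)).toReal) (𝓝[>] 0) (𝓝 (1 / 6)) := by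
  have hlower :
      Tendsto (fun x : ℝ => (√(1 + x ^ 2 * (1 + c ^ 2)))⁻¹ ^ 3 / 6) (𝓝[>] 0) (𝓝 (1 / 6)) := by
    have hcont : Continuous fun x : ℝ => (√(1 + x ^ 2 * (1 + c ^ 2)))⁻¹ ^ 3 / 6 :=
      (((continuous_const.add (by fun_prop)).sqrt.inv₀ fun x =>
        (sqrt_pos.2 (by positivity : (0 : ℝ) < 1 + x ^ 2 * (1 + c ^ 2))).ne').pow 3).div_const 6
    refine tendsto_nhdsWithin_of_tendsto_nhds ?_
    convert hcont.tendsto 0 using 2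
    simp
  exact tendsto_of_tendsto_of_tendsto_of_le_of_le hlower tendsto_const_nhds
    (fun _ => le_toReal_volume_sector) (fun _ => toReal_volume_sector_le_one_sixth)

lemma tendsto_toReal_volume_sector_atTop (hc : 0 < c) :
    Tendsto (fun x => (volume (sector x c)).toReal) atTop (𝓝 0) :=
  tendsto_of_tendsto_of_tendsto_of_le_of_le' tendsto_const_nhds
    ((tendsto_pow_atTop two_ne_zero).atTop_mul_const hc).inv_tendsto_atTop
    (Eventually.of_forall fun _ => ENNReal.toReal_nonneg)
    ((eventually_gt_atTop 0).mono fun _ hx => toReal_volume_sector_le_inv hx hc)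

end Sector

/-- Setup of Lemma 1: the unit sphere is centered at `O = 0`, `H = (0,0,1)` is at
distance 1 from `O`, and in the plane `z = 1` (through `H`, perpendicular to `OH`)
we have the right triangle `ABH` with `B = (x, 0, 1)`, `A = (x, x·tan θ, 1)`, so
that `HB ⊥ AB`, `∠AHB = θ` and `BH = x`.  `η x` is the ratio of the volume of the
part of the unit ball cut out by the cone from `O` over the tetrahedron `OABH`
to the volume `x² tan θ / 6` of the tetrahedron.  Then `η` is strictly decreasing
on `(0, ∞)`, `η → 1` as `x → 0⁺`, and `η → 0` as `x → ∞`. -/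
theorem eta_strictAnti_of_tetrahedron (θ : ℝ) (hθ : 0 < θ) (hθ' : θ < π / 2) :
    let O : EuclideanSpace ℝ (Fin 3) := 0
    let H : EuclideanSpace ℝ (Fin 3) := (WithLp.equiv 2 _).symm ![0, 0, 1]
    let B : ℝ → EuclideanSpace ℝ (Fin 3) := fun x => (WithLp.equiv 2 _).symm ![x, 0, 1]
    let A : ℝ → EuclideanSpace ℝ (Fin 3) :=
      fun x => (WithLp.equiv 2 _).symm ![x, x * Real.tan θ, 1]
    let T : ℝ → Set (EuclideanSpace ℝ (Fin 3)) :=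
      fun x => convexHull ℝ {O, A x, B x, H}
    let cone : ℝ → Set (EuclideanSpace ℝ (Fin 3)) :=
      fun x => {y | ∃ t : ℝ, 0 ≤ t ∧ ∃ p ∈ T x, y = t • p}
    let Vs : ℝ → ℝ := fun x => (MeasureTheory.volume (Metric.ball O 1 ∩ cone x)).toReal
    let η : ℝ → ℝ := fun x => Vs x / (x ^ 2 * Real.tan θ / 6)
    StrictAntiOn η (Set.Ioi 0) ∧
      Filter.Tendsto η (nhdsWithin 0 (Set.Ioi 0)) (nhds 1) ∧
      Filter.Tendsto η Filter.atTop (nhds 0) := by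
  intro O H B A T cone Vs η
  have hc : 0 < tan θ := tan_pos_of_pos_of_lt_pi_div_two hθ hθ'
  set σ : ℝ → ℝ := fun x => (volume (sector x (tan θ))).toReal
  have hη : EqOn (fun x => 6 * σ x) η (Ioi 0) := by
    intro x (hx : 0 < x)
    have hVs : Vs x = x ^ 2 * tan θ * σ x := by
      rw [← ENNReal.toReal_ofReal (by positivity : 0 ≤ x ^ 2 * tan θ), ← ENNReal.toReal_mul,
        ← volume_ball_inter_coneOver_tetra x hc.le]
      rfl
    have : x ^ 2 * tan θ ≠ 0 := by positivity
    simp only [η, hVs]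
    field_simp
  refine ⟨?_, ?_, ?_⟩
  · refine StrictAntiOn.congr (fun a ha b hb hab => ?_) hη
    linarith [strictAntiOn_toReal_volume_sector (tan θ) ha hb hab]
  · refine Tendsto.congr' (eventually_mem_nhdsWithin.mono hη) ?_
    simpa using (tendsto_toReal_volume_sector_nhdsGT_zero (tan θ)).const_mul 6
  · refine Tendsto.congr' ((eventually_gt_atTop 0).mono hη) ?_
    simpa using (tendsto_toReal_volume_sector_atTop hc).const_mul 6
end
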